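/- Let (Ω,Σ,μ) be a nonatomic complete finite measure space, E a separable Banach space, and f ∈ L¹(μ,E). Then the norm closure of the range {∫_A f dμ : A ∈ Σ} of the vector measure A ↦ ∫_A f dμ is a norm compact and convex subset of E. -/

import Mathlib

open MeasureTheory TopologicalSpace
open scoped Classical

noncomputable section

/-- A measure is *nonatomic* if every measurable set of positive measure
contains a measurable subset of strictly smaller positive measure. -/
def Nonatomic {Ω : Type*} [MeasurableSpace Ω] (μ : Measure Ω) : Prop :=
  ∀ A : Set Ω, MeasurableSet A → 0 < μ A →
    ∃ B ⊆ A, MeasurableSet B ∧ 0 < μ B ∧ μ B < μ A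

open Set
open scoped ENNReal

section Aux

variable {Ω : Type*} [MeasurableSpace Ω] {μ : Measure Ω}

lemma Nonatomic.exists_half (hna : Nonatomic μ) {A : Set Ω} (hA : MeasurableSet A)
    (h0 : 0 < μ A) (hfin : μ A ≠ ∞) :
    ∃ B, B ⊆ A ∧ MeasurableSet B ∧ 0 < μ B ∧ 2 * μ B ≤ μ A := by
  obtain ⟨B, hBA, hBm, hB0, hBlt⟩ := hna A hA h0
  have hBfin : μ B ≠ ∞ := (hBlt.trans (lt_top_iff_ne_top.2 hfin)).ne
  have hdiff : μ (A \ B) = μ A - μ B := measure_diff hBA hBm.nullMeasurableSet hBfin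
  by_cases h : 2 * μ B ≤ μ A
  · exact ⟨B, hBA, hBm, hB0, h⟩
  push_neg at h
  refine ⟨A \ B, diff_subset, hA.diff hBm, ?_, ?_⟩
  · rw [hdiff]; exact tsub_pos_of_lt hBlt
  · rw [hdiff, two_mul]
    have h1 : μ A - μ B ≤ μ B := tsub_le_iff_right.2 (by rw [← two_mul]; exact h.le)
    calc μ A - μ B + (μ A - μ B) ≤ μ A - μ B + μ B := by exact add_le_add_right h1 _
    _ = μ A := tsub_add_cancel_of_le hBlt.le

lemma Nonatomic.exists_le (hna : Nonatomic μ) {A : Set Ω} (hA : MeasurableSet A)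
    (h0 : 0 < μ A) (hfin : μ A ≠ ∞) {δ : ℝ≥0∞} (hδ : δ ≠ 0) :
    ∃ C, C ⊆ A ∧ MeasurableSet C ∧ 0 < μ C ∧ μ C ≤ δ := by
  have key : ∀ n : ℕ, ∃ C, C ⊆ A ∧ MeasurableSet C ∧ 0 < μ C ∧ μ C ≤ 2⁻¹ ^ n * μ A := by
    intro n; induction n with
    | zero => exact ⟨A, subset_rfl, hA, h0, by simp⟩
    | succ n ih =>
      obtain ⟨C, hCA, hCm, hC0, hCle⟩ := ih
      have hCfin : μ C ≠ ∞ := ne_top_of_le_ne_top hfin (measure_mono hCA)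
      obtain ⟨B, hBC, hBm, hB0, hBle⟩ := Nonatomic.exists_half hna hCm hC0 hCfin
      refine ⟨B, hBC.trans hCA, hBm, hB0, ?_⟩
      have h2 : μ B ≤ 2⁻¹ * μ C := by
        rw [← ENNReal.div_eq_inv_mul]
        exact ENNReal.le_div_iff_mul_le (Or.inl two_ne_zero) (Or.inl ENNReal.ofNat_ne_top) |>.2
          (by rw [mul_comm]; exact hBle)
      calc μ B ≤ 2⁻¹ * μ C := h2
        _ ≤ 2⁻¹ * (2⁻¹ ^ n * μ A) := mul_le_mul_right hCle _
        _ = 2⁻¹ ^ (n + 1) * μ A := by ring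
  obtain ⟨n, hn⟩ := ENNReal.exists_inv_two_pow_lt (a := δ / μ A)
    (by simp [ENNReal.div_eq_zero_iff]; exact ⟨hδ, hfin⟩)
  obtain ⟨C, hCA, hCm, hC0, hCle⟩ := key n
  refine ⟨C, hCA, hCm, hC0, hCle.trans ?_⟩
  calc 2⁻¹ ^ n * μ A ≤ δ / μ A * μ A := mul_le_mul_left hn.le _
    _ = μ A * (δ / μ A) := mul_comm _ _
    _ ≤ δ := ENNReal.mul_div_le

lemma Nonatomic.exists_approx (hna : Nonatomic μ) [IsFiniteMeasure μ] {A : Set Ω}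
    (hA : MeasurableSet A) {t δ : ℝ≥0∞} (ht : t ≤ μ A) (hδ : δ ≠ 0) :
    ∃ B, B ⊆ A ∧ MeasurableSet B ∧ μ B ≤ t ∧ t ≤ μ B + δ := by
  rcases eq_or_lt_of_le ht with h | hlt
  · exact ⟨A, subset_rfl, hA, h.ge, by rw [h]; exact le_self_add⟩
  have hfin : μ A ≠ ∞ := measure_ne_top μ A
  have htfin : t ≠ ∞ := (hlt.trans (lt_top_iff_ne_top.2 hfin)).ne
  -- step function
  have key : ∀ B : Set Ω, B ⊆ A → MeasurableSet B → μ B ≤ t →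
      ∃ B', B ⊆ B' ∧ B' ⊆ A ∧ MeasurableSet B' ∧ μ B' ≤ t ∧
        ∀ C', C' ⊆ A \ B → MeasurableSet C' → μ C' ≤ t - μ B →
          2 * μ B + μ C' ≤ 2 * μ B' := by
    intro B hBA hBm hBt
    set s : ℝ≥0∞ := ⨆ (C : {C : Set Ω // C ⊆ A \ B ∧ MeasurableSet C ∧ μ C ≤ t - μ B}), μ C.1
      with hs
    have hsle : s ≤ t := by
      refine iSup_le fun C => C.2.2.2.trans ?_
      exact tsub_le_self.trans le_rfl
    have hsfin : s ≠ ∞ := ne_top_of_le_ne_top htfin hsle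
    rcases eq_or_ne s 0 with h0 | h0
    · refine ⟨B, subset_rfl, hBA, hBm, hBt, fun C' hC' hC'm hC'le => ?_⟩
      have h1 : μ C' ≤ s := le_iSup_iff.2 fun b hb => hb ⟨C', hC', hC'm, hC'le⟩
      have h2 : μ C' = 0 := le_antisymm (h1.trans_eq h0) bot_le
      simp [h2]
    · have hhalf : s / 2 < s := ENNReal.half_lt_self h0 hsfin
      obtain ⟨⟨C, hCsub, hCm, hCle⟩, hC⟩ := lt_iSup_iff.1 hhalf
      refine ⟨B ∪ C, subset_union_left, union_subset hBA (hCsub.trans diff_subset),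
        hBm.union hCm, ?_, ?_⟩
      · have hdisj : Disjoint B C := Set.disjoint_of_subset_right hCsub disjoint_sdiff_self_right
        rw [measure_union hdisj hCm]
        exact (add_le_add_right hCle _).trans_eq (add_tsub_cancel_of_le hBt)
      · intro C' hC' hC'm hC'le
        have hdisj : Disjoint B C := Set.disjoint_of_subset_right hCsub disjoint_sdiff_self_right
        rw [measure_union hdisj hCm]
        have h1 : μ C' ≤ s := le_iSup_iff.2 fun b hb => hb ⟨C', hC', hC'm, hC'le⟩
        have h2 : s ≤ 2 * μ C := by
          have h3 := (ENNReal.div_lt_iff (Or.inl two_ne_zero) (Or.inl ENNReal.ofNat_ne_top)).1 hC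
          rw [mul_comm] at h3; exact h3.le
        calc 2 * μ B + μ C' ≤ 2 * μ B + 2 * μ C := add_le_add_right (h1.trans h2) _
          _ = 2 * (μ B + μ C) := by ring
  choose F hF1 hF2 hF3 hF4 hF5 using key
  let seq : ℕ → {B : Set Ω // B ⊆ A ∧ MeasurableSet B ∧ μ B ≤ t} := fun n =>
    Nat.rec ⟨∅, empty_subset _, MeasurableSet.empty, by simp⟩
      (fun _ p => ⟨F p.1 p.2.1 p.2.2.1 p.2.2.2, hF2 _ _ _ _, hF3 _ _ _ _, hF4 _ _ _ _⟩) n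
  have hmono : Monotone fun n => (seq n).1 :=
    monotone_nat_of_le_succ fun n => hF1 (seq n).1 (seq n).2.1 (seq n).2.2.1 (seq n).2.2.2
  have hstep : ∀ n, ∀ C', C' ⊆ A \ (seq n).1 → MeasurableSet C' → μ C' ≤ t - μ (seq n).1 →
      2 * μ (seq n).1 + μ C' ≤ 2 * μ (seq (n + 1)).1 := fun n =>
    hF5 (seq n).1 (seq n).2.1 (seq n).2.2.1 (seq n).2.2.2
  set Binf : Set Ω := ⋃ n, (seq n).1 with hBinf
  have hBinfm : MeasurableSet Binf := MeasurableSet.iUnion fun n => (seq n).2.2.1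
  have hBinfA : Binf ⊆ A := iUnion_subset fun n => (seq n).2.1
  have hmuU : μ Binf = ⨆ n, μ (seq n).1 :=
    (hmono.directed_le).measure_iUnion
  have hBinft : μ Binf ≤ t := by rw [hmuU]; exact iSup_le fun n => (seq n).2.2.2
  refine ⟨Binf, hBinfA, hBinfm, hBinft, ?_⟩
  by_contra hcon
  push_neg at hcon
  have hd : 0 < μ (A \ Binf) := by
    rw [measure_diff hBinfA hBinfm.nullMeasurableSet (measure_ne_top μ _)]
    exact tsub_pos_of_lt (hBinft.trans_lt hlt)
  obtain ⟨C, hCsub, hCm, hC0, hCδ⟩ :=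
    hna.exists_le (hA.diff hBinfm) hd (measure_ne_top μ _) hδ
  have hCfin : μ C ≠ ∞ := measure_ne_top μ _
  have hCstep : ∀ n, 2 * μ (seq n).1 + μ C ≤ 2 * μ (seq (n + 1)).1 := by
    intro n
    refine hstep n C (hCsub.trans (diff_subset_diff_right fun x hx => mem_iUnion.2 ⟨n, hx⟩)) hCm ?_
    refine hCδ.trans (ENNReal.le_sub_of_add_le_left (measure_ne_top μ _) ?_)
    calc μ (seq n).1 + δ ≤ μ Binf + δ :=
          add_le_add_left (measure_mono (subset_iUnion (fun n => (seq n).1) n)) _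
      _ ≤ t := hcon.le
  have hn : ∀ n : ℕ, (n : ℝ≥0∞) * μ C ≤ 2 * μ (seq n).1 := by
    intro n; induction n with
    | zero => simp
    | succ n ih =>
      push_cast
      calc ((n : ℝ≥0∞) + 1) * μ C = (n : ℝ≥0∞) * μ C + μ C := by ring
        _ ≤ 2 * μ (seq n).1 + μ C := add_le_add_left ih _
        _ ≤ 2 * μ (seq (n + 1)).1 := hCstep n
  have hbound : ∀ n : ℕ, (n : ℝ≥0∞) * μ C ≤ 2 * t := fun n =>
    (hn n).trans (mul_le_mul_right (seq n).2.2.2 _)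
  have h2t : 2 * t ≠ ∞ := ENNReal.mul_ne_top (by simp) htfin
  obtain ⟨n, hngt⟩ := ENNReal.exists_nat_gt (r := 2 * t / μ C)
    (ENNReal.div_lt_top h2t hC0.ne').ne
  have : 2 * t < (n : ℝ≥0∞) * μ C :=
    (ENNReal.div_lt_iff (Or.inl hC0.ne') (Or.inl hCfin)).1 hngt
  exact absurd (hbound n) (by exact not_le.2 this)

variable {E : Type*} [NormedAddCommGroup E] [NormedSpace ℝ E] [CompleteSpace E]

lemma simple_setIntegral (g : SimpleFunc Ω E) (hg : Integrable g μ) {A : Set Ω}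
    (hA : MeasurableSet A) :
    ∫ ω in A, g ω ∂μ = ∑ x ∈ g.range, (μ (g ⁻¹' {x} ∩ A)).toReal • x := by
  rw [SimpleFunc.integral_eq_sum g (hg.restrict (s := A))]
  refine Finset.sum_congr rfl fun x _ => ?_
  rw [measureReal_restrict_apply (g.measurableSet_fiber x), measureReal_def]

lemma Nonatomic.simple_scale (hna : Nonatomic μ) [IsFiniteMeasure μ] (g : SimpleFunc Ω E)
    (hg : Integrable g μ) {D : Set Ω} (hD : MeasurableSet D) {t : ℝ}
    (ht0 : 0 ≤ t) (ht1 : t ≤ 1) {ε : ℝ} (hε : 0 < ε) :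
    ∃ C, C ⊆ D ∧ MeasurableSet C ∧
      ‖(∫ ω in C, g ω ∂μ) - t • ∫ ω in D, g ω ∂μ‖ ≤ ε := by
  classical
  set n : ℕ := g.range.card with hn
  have hρpos : ∀ x : E, 0 < ε / (n + 1) / (‖x‖ + 1) := fun x => by positivity
  have hchoice : ∀ x : E, ∃ Cx, Cx ⊆ g ⁻¹' {x} ∩ D ∧ MeasurableSet Cx ∧
      μ Cx ≤ ENNReal.ofReal (t * (μ (g ⁻¹' {x} ∩ D)).toReal) ∧
      ENNReal.ofReal (t * (μ (g ⁻¹' {x} ∩ D)).toReal) ≤ μ Cx +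
        ENNReal.ofReal (ε / (n + 1) / (‖x‖ + 1)) := by
    intro x
    have hBm : MeasurableSet (g ⁻¹' {x} ∩ D) := (g.measurableSet_fiber x).inter hD
    have htar : ENNReal.ofReal (t * (μ (g ⁻¹' {x} ∩ D)).toReal) ≤ μ (g ⁻¹' {x} ∩ D) := by
      calc ENNReal.ofReal (t * (μ (g ⁻¹' {x} ∩ D)).toReal)
          ≤ ENNReal.ofReal ((μ (g ⁻¹' {x} ∩ D)).toReal) := ENNReal.ofReal_le_ofReal
            (by nlinarith [ENNReal.toReal_nonneg (a := μ (g ⁻¹' {x} ∩ D))])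
        _ = μ (g ⁻¹' {x} ∩ D) := ENNReal.ofReal_toReal (measure_ne_top μ _)
    exact hna.exists_approx hBm htar (ENNReal.ofReal_pos.2 (hρpos x)).ne'
  choose Cf hCsub hCm hCle hCge using hchoice
  set C : Set Ω := ⋃ x ∈ g.range, Cf x with hC
  have hCD : C ⊆ D := iUnion₂_subset fun x _ => (hCsub x).trans inter_subset_right
  have hCmeas : MeasurableSet C := g.range.measurableSet_biUnion fun x _ => hCm x
  have hfiber : ∀ y ∈ g.range, g ⁻¹' {y} ∩ C = Cf y := by
    intro y hy
    apply subset_antisymm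
    · rintro ω ⟨hωy, hωC⟩
      simp only [hC, mem_iUnion, exists_prop] at hωC
      obtain ⟨x, hx, hωx⟩ := hωC
      have h1 : g ω = x := (hCsub x hωx).1
      have h2 : g ω = y := hωy
      exact h1.symm.trans h2 ▸ hωx
    · intro ω hω
      exact ⟨(hCsub y hω).1, mem_iUnion₂.2 ⟨y, hy, hω⟩⟩
  have hIC : ∫ ω in C, g ω ∂μ = ∑ x ∈ g.range, (μ (Cf x)).toReal • x := by
    rw [simple_setIntegral g hg hCmeas]
    exact Finset.sum_congr rfl fun x hx => by rw [hfiber x hx]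
  have hID : t • ∫ ω in D, g ω ∂μ =
      ∑ x ∈ g.range, (t * (μ (g ⁻¹' {x} ∩ D)).toReal) • x := by
    rw [simple_setIntegral g hg hD, Finset.smul_sum]
    exact Finset.sum_congr rfl fun x _ => by rw [smul_smul]
  have hterm : ∀ x : E, |(μ (Cf x)).toReal - t * (μ (g ⁻¹' {x} ∩ D)).toReal| ≤
      ε / (n + 1) / (‖x‖ + 1) := by
    intro x
    have hfin : μ (Cf x) ≠ ∞ := measure_ne_top μ _
    have hnn : 0 ≤ t * (μ (g ⁻¹' {x} ∩ D)).toReal :=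
      mul_nonneg ht0 ENNReal.toReal_nonneg
    have h1 : (μ (Cf x)).toReal ≤ t * (μ (g ⁻¹' {x} ∩ D)).toReal := by
      have := ENNReal.toReal_mono ENNReal.ofReal_ne_top (hCle x)
      rwa [ENNReal.toReal_ofReal hnn] at this
    have h2 : t * (μ (g ⁻¹' {x} ∩ D)).toReal ≤ (μ (Cf x)).toReal +
        ε / (n + 1) / (‖x‖ + 1) := by
      have := ENNReal.toReal_mono (by finiteness) (hCge x)
      rwa [ENNReal.toReal_ofReal hnn, ENNReal.toReal_add hfin ENNReal.ofReal_ne_top,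
        ENNReal.toReal_ofReal (hρpos x).le] at this
    rw [abs_le]
    constructor <;> [linarith; linarith [hρpos x]]
  refine ⟨C, hCD, hCmeas, ?_⟩
  rw [hIC, hID, ← Finset.sum_sub_distrib]
  calc ‖∑ x ∈ g.range, ((μ (Cf x)).toReal • x - (t * (μ (g ⁻¹' {x} ∩ D)).toReal) • x)‖
      ≤ ∑ x ∈ g.range, ‖(μ (Cf x)).toReal • x - (t * (μ (g ⁻¹' {x} ∩ D)).toReal) • x‖ :=
        norm_sum_le _ _
    _ ≤ ∑ x ∈ g.range, ε / (n + 1) := by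
        refine Finset.sum_le_sum fun x _ => ?_
        rw [← sub_smul, norm_smul, Real.norm_eq_abs]
        calc |(μ (Cf x)).toReal - t * (μ (g ⁻¹' {x} ∩ D)).toReal| * ‖x‖
            ≤ (ε / (n + 1) / (‖x‖ + 1)) * ‖x‖ :=
              mul_le_mul_of_nonneg_right (hterm x) (norm_nonneg x)
          _ ≤ ε / (n + 1) := by
              rw [div_mul_eq_mul_div]
              rw [div_le_iff₀ (by positivity)]
              nlinarith [norm_nonneg x, hρpos x, div_nonneg hε.le (by positivity : (0:ℝ) ≤ (n:ℝ)+1)]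
    _ = n * (ε / (n + 1)) := by rw [Finset.sum_const, hn]; simp [nsmul_eq_mul]
    _ ≤ ε := by
        have h1 : (n : ℝ) / (n + 1) ≤ 1 := by
          rw [div_le_one (by positivity)]; linarith
        calc (n : ℝ) * (ε / (n + 1)) = ((n : ℝ) / (n + 1)) * ε := by ring
          _ ≤ 1 * ε := mul_le_mul_of_nonneg_right h1 hε.le
          _ = ε := one_mul ε

lemma err_bound {f g : Ω → E} (hf : Integrable f μ) (hg : Integrable g μ) (S : Set Ω) :
    ‖(∫ ω in S, f ω ∂μ) - ∫ ω in S, g ω ∂μ‖ ≤ ∫ ω, ‖f ω - g ω‖ ∂μ := by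
  rw [← integral_sub hf.integrableOn hg.integrableOn]
  calc ‖∫ ω in S, (f ω - g ω) ∂μ‖ ≤ ∫ ω in S, ‖f ω - g ω‖ ∂μ :=
        norm_integral_le_integral_norm _
    _ ≤ ∫ ω, ‖f ω - g ω‖ ∂μ :=
        setIntegral_le_integral (hf.sub hg).norm
          (Filter.Eventually.of_forall fun ω => norm_nonneg _)

lemma Nonatomic.integrable_scale (hna : Nonatomic μ) [IsFiniteMeasure μ] {f : Ω → E}
    (hf : Integrable f μ) {D : Set Ω} (hD : MeasurableSet D) {t : ℝ}
    (ht0 : 0 ≤ t) (ht1 : t ≤ 1) {ε : ℝ} (hε : 0 < ε) :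
    ∃ C, C ⊆ D ∧ MeasurableSet C ∧
      ‖(∫ ω in C, f ω ∂μ) - t • ∫ ω in D, f ω ∂μ‖ ≤ ε := by
  obtain ⟨g, hgnorm, hgmem⟩ := (memLp_one_iff_integrable.2 hf).exists_simpleFunc_eLpNorm_sub_lt
    (by simp) (ENNReal.ofReal_pos.2 (show (0:ℝ) < ε/3 by positivity)).ne'
  have hgint : Integrable (⇑g) μ := memLp_one_iff_integrable.1 hgmem
  have herr : ∫ ω, ‖f ω - g ω‖ ∂μ ≤ ε / 3 := by
    have h1 : ∫ ω, ‖f ω - g ω‖ ∂μ = (eLpNorm (f - ⇑g) 1 μ).toReal := by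
      rw [eLpNorm_one_eq_lintegral_enorm,
        ← integral_norm_eq_lintegral_enorm (hf.sub hgint).aestronglyMeasurable]
      simp only [Pi.sub_apply]
    rw [h1]
    exact (ENNReal.toReal_lt_of_lt_ofReal hgnorm).le
  obtain ⟨C, hCD, hCm, hC⟩ := hna.simple_scale g hgint hD ht0 ht1
    (show (0:ℝ) < ε/3 by positivity)
  refine ⟨C, hCD, hCm, ?_⟩
  have e1 : ‖(∫ ω in C, f ω ∂μ) - ∫ ω in C, g ω ∂μ‖ ≤ ε / 3 :=
    (err_bound hf hgint C).trans herr
  have e3 : ‖t • (∫ ω in D, g ω ∂μ) - t • ∫ ω in D, f ω ∂μ‖ ≤ ε / 3 := by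
    rw [← smul_sub, norm_smul, Real.norm_eq_abs, abs_of_nonneg ht0]
    have h2 : ‖(∫ ω in D, g ω ∂μ) - ∫ ω in D, f ω ∂μ‖ ≤ ε / 3 := by
      refine (err_bound hgint hf D).trans ?_
      calc ∫ ω, ‖g ω - f ω‖ ∂μ = ∫ ω, ‖f ω - g ω‖ ∂μ := by
            simp only [norm_sub_rev]
        _ ≤ ε / 3 := herr
    calc t * ‖(∫ ω in D, g ω ∂μ) - ∫ ω in D, f ω ∂μ‖ ≤ 1 * (ε/3) :=
          mul_le_mul ht1 h2 (norm_nonneg _) zero_le_one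
      _ = ε / 3 := one_mul _
  calc ‖(∫ ω in C, f ω ∂μ) - t • ∫ ω in D, f ω ∂μ‖
      ≤ ‖(∫ ω in C, f ω ∂μ) - ∫ ω in C, g ω ∂μ‖ +
        ‖(∫ ω in C, g ω ∂μ) - t • ∫ ω in D, g ω ∂μ‖ +
        ‖t • (∫ ω in D, g ω ∂μ) - t • ∫ ω in D, f ω ∂μ‖ := by
          rw [show (∫ ω in C, f ω ∂μ) - t • ∫ ω in D, f ω ∂μ =
            ((∫ ω in C, f ω ∂μ) - ∫ ω in C, g ω ∂μ) +
            ((∫ ω in C, g ω ∂μ) - t • ∫ ω in D, g ω ∂μ) +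
            (t • (∫ ω in D, g ω ∂μ) - t • ∫ ω in D, f ω ∂μ) by abel]
          exact norm_add₃_le
    _ ≤ ε/3 + ε/3 + ε/3 := by gcongr
    _ = ε := by ring

lemma exists_simple_L1 {f : Ω → E} (hf : Integrable f μ) {η : ℝ} (hη : 0 < η) :
    ∃ g : SimpleFunc Ω E, Integrable (⇑g) μ ∧ ∫ ω, ‖f ω - g ω‖ ∂μ ≤ η := by
  obtain ⟨g, hgnorm, hgmem⟩ := (memLp_one_iff_integrable.2 hf).exists_simpleFunc_eLpNorm_sub_lt
    (by simp) (ENNReal.ofReal_pos.2 hη).ne'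
  have hgint : Integrable (⇑g) μ := memLp_one_iff_integrable.1 hgmem
  refine ⟨g, hgint, ?_⟩
  have h1 : ∫ ω, ‖f ω - g ω‖ ∂μ = (eLpNorm (f - ⇑g) 1 μ).toReal := by
    rw [eLpNorm_one_eq_lintegral_enorm,
      ← integral_norm_eq_lintegral_enorm (hf.sub hgint).aestronglyMeasurable]
    simp only [Pi.sub_apply]
  rw [h1]
  exact (ENNReal.toReal_lt_of_lt_ofReal hgnorm).le

lemma Nonatomic.combo (hna : Nonatomic μ) [IsFiniteMeasure μ] {f : Ω → E}
    (hf : Integrable f μ) {A B : Set Ω} (hA : MeasurableSet A) (hB : MeasurableSet B)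
    {a b : ℝ} (ha : 0 ≤ a) (hb : 0 ≤ b) (hab : a + b = 1) {ε : ℝ} (hε : 0 < ε) :
    ∃ C, MeasurableSet C ∧
      ‖(∫ ω in C, f ω ∂μ) - (a • ∫ ω in A, f ω ∂μ + b • ∫ ω in B, f ω ∂μ)‖ ≤ ε := by
  obtain ⟨C₁, hC₁sub, hC₁m, hC₁⟩ := hna.integrable_scale hf (hA.diff hB) ha (by linarith)
    (half_pos hε)
  obtain ⟨C₂, hC₂sub, hC₂m, hC₂⟩ := hna.integrable_scale hf (hB.diff hA) hb (by linarith)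
    (half_pos hε)
  refine ⟨(A ∩ B) ∪ C₁ ∪ C₂, ((hA.inter hB).union hC₁m).union hC₂m, ?_⟩
  have hIA : ∫ ω in A, f ω ∂μ = (∫ ω in A ∩ B, f ω ∂μ) + ∫ ω in A \ B, f ω ∂μ :=
    (integral_inter_add_diff hB hf.integrableOn).symm
  have hIB : ∫ ω in B, f ω ∂μ = (∫ ω in A ∩ B, f ω ∂μ) + ∫ ω in B \ A, f ω ∂μ := by
    rw [inter_comm]
    exact (integral_inter_add_diff hA hf.integrableOn).symm
  have hd₁ : Disjoint (A ∩ B) C₁ :=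
    (disjoint_sdiff_right.mono_left inter_subset_right).mono_right hC₁sub
  have hd₂ : Disjoint ((A ∩ B) ∪ C₁) C₂ :=
    ((disjoint_sdiff_right (s := A) (t := B)).mono_left
      (union_subset inter_subset_left (hC₁sub.trans diff_subset))).mono_right hC₂sub
  have hu1 : ∫ ω in (A ∩ B) ∪ C₁, f ω ∂μ = (∫ ω in A ∩ B, f ω ∂μ) + ∫ ω in C₁, f ω ∂μ :=
    setIntegral_union hd₁ hC₁m hf.integrableOn hf.integrableOn
  have hu2 : ∫ ω in (A ∩ B) ∪ C₁ ∪ C₂, f ω ∂μ =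
      (∫ ω in (A ∩ B) ∪ C₁, f ω ∂μ) + ∫ ω in C₂, f ω ∂μ :=
    setIntegral_union hd₂ hC₂m hf.integrableOn hf.integrableOn
  rw [hu2, hu1, hIA, hIB]
  have hkey : (∫ ω in A ∩ B, f ω ∂μ) + (∫ ω in C₁, f ω ∂μ) + (∫ ω in C₂, f ω ∂μ) -
      (a • ((∫ ω in A ∩ B, f ω ∂μ) + ∫ ω in A \ B, f ω ∂μ) +
       b • ((∫ ω in A ∩ B, f ω ∂μ) + ∫ ω in B \ A, f ω ∂μ)) =
      ((∫ ω in C₁, f ω ∂μ) - a • ∫ ω in A \ B, f ω ∂μ) +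
      ((∫ ω in C₂, f ω ∂μ) - b • ∫ ω in B \ A, f ω ∂μ) +
      ((1 - (a + b)) • ∫ ω in A ∩ B, f ω ∂μ) := by
    simp only [smul_add, sub_smul, add_smul, one_smul]
    abel
  rw [hkey, hab]
  simp only [sub_self, zero_smul, add_zero]
  calc ‖((∫ ω in C₁, f ω ∂μ) - a • ∫ ω in A \ B, f ω ∂μ) +
        ((∫ ω in C₂, f ω ∂μ) - b • ∫ ω in B \ A, f ω ∂μ)‖
      ≤ ‖(∫ ω in C₁, f ω ∂μ) - a • ∫ ω in A \ B, f ω ∂μ‖ +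
        ‖(∫ ω in C₂, f ω ∂μ) - b • ∫ ω in B \ A, f ω ∂μ‖ := norm_add_le _ _
    _ ≤ ε/2 + ε/2 := add_le_add hC₁ hC₂
    _ = ε := by ring

end Aux

/-- **Uhl's approximate Lyapunov theorem.** Over a nonatomic finite measure space, the norm
closure of the range `{∫_A f dμ : A ∈ Σ}` of the vector measure `A ↦ ∫_A f dμ` associated
with `f ∈ L¹(μ,E)` is norm compact and convex. -/
theorem isCompact_convex_closure_range_indefinite_integral
    {Ω : Type*} [MeasurableSpace Ω] (μ : Measure Ω) [IsFiniteMeasure μ] [μ.IsComplete]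
    {E : Type*} [NormedAddCommGroup E] [NormedSpace ℝ E] [CompleteSpace E]
    [TopologicalSpace.SeparableSpace E]
    (hna : Nonatomic μ) (f : Lp E 1 μ) :
    IsCompact (closure {x : E | ∃ A : Set Ω, MeasurableSet A ∧
        ∫ ω in A, (f : Ω → E) ω ∂μ = x}) ∧
      Convex ℝ (closure {x : E | ∃ A : Set Ω, MeasurableSet A ∧
        ∫ ω in A, (f : Ω → E) ω ∂μ = x}) := by

  set S := {x : E | ∃ A : Set Ω, MeasurableSet A ∧ ∫ ω in A, (f : Ω → E) ω ∂μ = x} with hSdef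
  have hfi : Integrable (⇑f) μ := L1.integrable_coeFn f
  constructor
  · -- compactness
    refine TotallyBounded.isCompact_of_isClosed (TotallyBounded.closure ?_) isClosed_closure
    rw [Metric.totallyBounded_iff]
    intro ε hε
    obtain ⟨g, hgint, herr⟩ := exists_simple_L1 hfi (show (0:ℝ) < ε/3 by positivity)
    set K := (fun c : E → ℝ => ∑ x ∈ g.range, c x • x) ''
      (Set.univ.pi fun _ : E => Icc (0:ℝ) (μ Set.univ).toReal) with hK
    have hKcomp : IsCompact K := by
      refine (isCompact_univ_pi fun _ => isCompact_Icc).image ?_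
      exact continuous_finset_sum _ fun x _ => (continuous_apply x).smul continuous_const
    have hKmem : ∀ A : Set Ω, MeasurableSet A → (∫ ω in A, g ω ∂μ) ∈ K := by
      intro A hA
      refine ⟨fun x => (μ (g ⁻¹' {x} ∩ A)).toReal, fun x _ => ?_, ?_⟩
      · exact ⟨ENNReal.toReal_nonneg,
          ENNReal.toReal_mono (measure_ne_top μ _) (measure_mono (subset_univ _))⟩
      · exact (simple_setIntegral g hgint hA).symm
    obtain ⟨F, hFfin, hFsub⟩ := (Metric.totallyBounded_iff).1 hKcomp.totallyBounded (ε/3)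
      (by positivity)
    refine ⟨F, hFfin, ?_⟩
    rintro x ⟨A, hA, rfl⟩
    have h1 : dist (∫ ω in A, f ω ∂μ) (∫ ω in A, g ω ∂μ) ≤ ε/3 := by
      rw [dist_eq_norm]; exact (err_bound hfi hgint A).trans herr
    obtain ⟨y, hyF, hy⟩ := mem_iUnion₂.1 (hFsub (hKmem A hA))
    refine mem_iUnion₂.2 ⟨y, hyF, Metric.mem_ball.2 ?_⟩
    have h2 : dist (∫ ω in A, g ω ∂μ) y < ε/3 := Metric.mem_ball.1 hy
    calc dist (∫ ω in A, f ω ∂μ) y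
        ≤ dist (∫ ω in A, f ω ∂μ) (∫ ω in A, g ω ∂μ) + dist (∫ ω in A, g ω ∂μ) y :=
          dist_triangle _ _ _
      _ < ε/3 + ε/3 := by apply add_lt_add_of_le_of_lt h1 h2
      _ < ε := by linarith
  · -- convexity
    intro x hx y hy a b ha hb hab
    refine Metric.mem_closure_iff.2 fun ε hε => ?_
    obtain ⟨x', hx'S, hxd⟩ := Metric.mem_closure_iff.1 hx (ε/4) (by positivity)
    obtain ⟨y', hy'S, hyd⟩ := Metric.mem_closure_iff.1 hy (ε/4) (by positivity)
    obtain ⟨A, hA, rfl⟩ := hx'S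
    obtain ⟨B, hB, rfl⟩ := hy'S
    obtain ⟨C, hCm, hC⟩ := hna.combo hfi hA hB ha hb hab (show (0:ℝ) < ε/4 by positivity)
    refine ⟨_, ⟨C, hCm, rfl⟩, ?_⟩
    have h1 : dist (a • x + b • y)
        (a • (∫ ω in A, f ω ∂μ) + b • ∫ ω in B, f ω ∂μ) ≤ ε/2 := by
      rw [dist_eq_norm]
      calc ‖a • x + b • y - (a • (∫ ω in A, f ω ∂μ) + b • ∫ ω in B, f ω ∂μ)‖
          = ‖a • (x - ∫ ω in A, f ω ∂μ) + b • (y - ∫ ω in B, f ω ∂μ)‖ := by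
            congr 1; simp only [smul_sub]; abel
        _ ≤ ‖a • (x - ∫ ω in A, f ω ∂μ)‖ + ‖b • (y - ∫ ω in B, f ω ∂μ)‖ := norm_add_le _ _
        _ = a * ‖x - ∫ ω in A, f ω ∂μ‖ + b * ‖y - ∫ ω in B, f ω ∂μ‖ := by
            rw [norm_smul, norm_smul, Real.norm_eq_abs, Real.norm_eq_abs,
              abs_of_nonneg ha, abs_of_nonneg hb]
        _ ≤ a * (ε/4) + b * (ε/4) := by
            have hx4 : ‖x - ∫ ω in A, f ω ∂μ‖ ≤ ε/4 := by
              rw [← dist_eq_norm]; exact hxd.le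
            have hy4 : ‖y - ∫ ω in B, f ω ∂μ‖ ≤ ε/4 := by
              rw [← dist_eq_norm]; exact hyd.le
            exact add_le_add (mul_le_mul_of_nonneg_left hx4 ha)
              (mul_le_mul_of_nonneg_left hy4 hb)
        _ = ε/4 := by rw [← add_mul, hab, one_mul]
        _ ≤ ε/2 := by linarith
    have h2 : dist (a • (∫ ω in A, f ω ∂μ) + b • ∫ ω in B, f ω ∂μ)
        (∫ ω in C, f ω ∂μ) ≤ ε/4 := by
      rw [dist_eq_norm, norm_sub_rev]; exact hC
    calc dist (a • x + b • y) (∫ ω in C, f ω ∂μ)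
        ≤ dist (a • x + b • y) (a • (∫ ω in A, f ω ∂μ) + b • ∫ ω in B, f ω ∂μ) +
          dist (a • (∫ ω in A, f ω ∂μ) + b • ∫ ω in B, f ω ∂μ) (∫ ω in C, f ω ∂μ) :=
          dist_triangle _ _ _
      _ ≤ ε/2 + ε/4 := add_le_add h1 h2
      _ < ε := by linarith
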